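/- arXiv:2403.01805 — 4 statements merged into one kernel-verified Lean document; each statement's English description precedes it below -/
import Mathlib

section
/- Normalization of the multivariate q-Gaussian: for 0 ≤ q < 1 and a symmetric positive definite matrix Σ ∈ ℝ^{n×n}, ∫_{ℝ^n} [1 - (1-q)·xᵀΣ⁻¹x/((n+4)-(n+2)q)]_+^{1/(1-q)} dx = det(Σ)^{1/2} (π((n+4)-(n+2)q)/(1-q))^{n/2} · Γ((2-q)/(1-q)) / Γ((2-q)/(1-q) + n/2), where Γ is the Gamma function. -/
/-! Writing `Σ⁻¹ = BᵀB`, the substitution `y = Bx` has Jacobian `|det B|⁻¹ = det(Σ)^(1/2)` and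
turns the integrand into the radial function `[1 - a‖y‖²]_+^p` with `a = (1-q)/((n+4)-(n+2)q)` and
`p = 1/(1-q)`, so that `p + 1 = (2-q)/(1-q)`. Scaling `y` by `√a` produces the factor `a^(-n/2)`;
polar coordinates reduce what is left to `n vol(ball 0 1) ∫₀¹ r^(n-1) (1-r²)^p dr`, and `t = r²`
turns this into the Beta integral `B(n/2, p+1)/2`. -/

open Real MeasureTheory Matrix

/-- The `q`-exponential: `exp_q(x) = [1 + (1-q)x]_+ ^ (1/(1-q))`. -/
noncomputable def qexp (q x : ℝ) : ℝ := (max (1 + (1 - q) * x) 0) ^ (1 / (1 - q))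

open Set

theorem integral_rpow_mul_one_sub_rpow {u v : ℝ} (hu : 0 < u) (hv : 0 < v) :
    ∫ x in (0 : ℝ)..1, x ^ (u - 1) * (1 - x) ^ (v - 1) = Gamma u * Gamma v / Gamma (u + v) := by
  have hB : Complex.betaIntegral u v = ↑(∫ x in (0 : ℝ)..1, x ^ (u - 1) * (1 - x) ^ (v - 1)) := by
    rw [Complex.betaIntegral, ← intervalIntegral.integral_ofReal]
    refine intervalIntegral.integral_congr fun x hx => ?_
    rw [uIcc_of_le zero_le_one] at hx
    push_cast
    rw [Complex.ofReal_cpow hx.1, Complex.ofReal_cpow (sub_nonneg.2 hx.2)]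
    push_cast
    ring
  rw [← ProbabilityTheory.beta, ProbabilityTheory.beta_eq_betaIntegralReal u v hu hv, hB,
    Complex.ofReal_re]

theorem integral_Ioi_rpow_mul_max_one_sub_rpow {u p : ℝ} (hu : 0 < u) (hp : 0 < p) :
    ∫ t in Ioi (0 : ℝ), t ^ (u - 1) * max (1 - t) 0 ^ p =
      Gamma u * Gamma (p + 1) / Gamma (u + p + 1) := by
  rw [setIntegral_eq_of_subset_of_forall_sdiff_eq_zero measurableSet_Ioi Ioc_subset_Ioi_self
    fun t ht => ?_, ← intervalIntegral.integral_of_le zero_le_one]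
  · rw [add_assoc, ← integral_rpow_mul_one_sub_rpow hu (by positivity : 0 < p + 1),
      add_sub_cancel_right]
    refine intervalIntegral.integral_congr fun t ht => ?_
    rw [uIcc_of_le zero_le_one] at ht
    rw [max_eq_left (sub_nonneg.2 ht.2)]
  · have ht1 : 1 < t := by simpa [mem_Ioi.1 ht.1] using ht.2
    rw [max_eq_right (by linarith), zero_rpow hp.ne', mul_zero]

theorem integral_Ioi_rpow_mul_max_one_sub_sq_rpow {s p : ℝ} (hs : 0 < s) (hp : 0 < p) :
    ∫ y in Ioi (0 : ℝ), y ^ (s - 1) * max (1 - y ^ 2) 0 ^ p =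
      Gamma (s / 2) * Gamma (p + 1) / Gamma (s / 2 + p + 1) / 2 := by
  rw [← integral_Ioi_rpow_mul_max_one_sub_rpow (half_pos hs) hp,
    ← integral_comp_rpow_Ioi_of_pos (g := fun t => t ^ (s / 2 - 1) * max (1 - t) 0 ^ p) two_pos,
    eq_div_iff two_ne_zero, ← integral_mul_const]
  refine setIntegral_congr_fun measurableSet_Ioi fun y (hy : 0 < y) => ?_
  have hpow : y ^ (s - 1) = y ^ ((2 : ℝ) - 1) * (y ^ (2 : ℝ)) ^ (s / 2 - 1) := by
    rw [← rpow_mul hy.le, ← rpow_add hy]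
    ring_nf
  rw [hpow, rpow_two, smul_eq_mul]
  ring

theorem EuclideanSpace.integral_max_one_sub_norm_sq_rpow (ι : Type*) [Fintype ι] {p : ℝ}
    (hp : 0 < p) :
    ∫ x : EuclideanSpace ℝ ι, max (1 - ‖x‖ ^ 2) 0 ^ p =
      π ^ (Fintype.card ι / 2 : ℝ) * (Gamma (p + 1) / Gamma (p + 1 + Fintype.card ι / 2)) := by
  have hΓ : 0 < Gamma (p + 1) := Gamma_pos_of_pos (by positivity)
  rcases isEmpty_or_nonempty ι with hι | hι
  · simp [volume_euclideanSpace_eq_dirac, hΓ.ne']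
  set n := Fintype.card ι with hn_def
  have hn : 0 < n := Fintype.card_pos
  have hpow : ∀ y : ℝ, 0 < y → y ^ (n - 1) = y ^ ((n : ℝ) - 1) := fun y _ => by
    rw [← rpow_natCast, Nat.cast_sub hn, Nat.cast_one]
  have hsqrt : √π ^ n = π ^ ((n : ℝ) / 2) := by
    rw [sqrt_eq_rpow, ← rpow_natCast, ← rpow_mul pi_pos.le]
    ring_nf
  have hΓn : Gamma (n / 2 + 1) = n / 2 * Gamma (n / 2) := Gamma_add_one (by positivity)
  rw [integral_fun_norm_addHaar volume fun r => max (1 - r ^ 2) 0 ^ p, finrank_euclideanSpace,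
    ← hn_def, measureReal_def, EuclideanSpace.volume_ball, ENNReal.ofReal_one, one_pow, one_mul,
    ENNReal.toReal_ofReal (by positivity),
    setIntegral_congr_fun measurableSet_Ioi fun y hy => by rw [smul_eq_mul, hpow y hy],
    integral_Ioi_rpow_mul_max_one_sub_sq_rpow (by positivity) hp, hsqrt, hΓn, nsmul_eq_mul,
    smul_eq_mul, show (n : ℝ) / 2 + p + 1 = p + 1 + n / 2 by ring]
  have : Gamma (n / 2) ≠ 0 := (Gamma_pos_of_pos (by positivity)).ne'
  field_simp

theorem EuclideanSpace.integral_max_one_sub_mul_norm_sq_rpow (ι : Type*) [Fintype ι] {p a : ℝ}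
    (hp : 0 < p) (ha : 0 < a) :
    ∫ x : EuclideanSpace ℝ ι, max (1 - a * ‖x‖ ^ 2) 0 ^ p =
      (π / a) ^ (Fintype.card ι / 2 : ℝ) *
        (Gamma (p + 1) / Gamma (p + 1 + Fintype.card ι / 2)) := by
  have hscale : ∀ x : EuclideanSpace ℝ ι, a * ‖x‖ ^ 2 = ‖√a • x‖ ^ 2 := fun x => by
    rw [norm_smul, mul_pow, norm_of_nonneg (sqrt_nonneg a), sq_sqrt ha.le]
  have hdet : ((√a ^ Fintype.card ι)⁻¹ : ℝ) = a⁻¹ ^ (Fintype.card ι / 2 : ℝ) := by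
    rw [sqrt_eq_rpow, ← rpow_natCast, ← rpow_mul ha.le, ← inv_rpow ha.le]
    ring_nf
  simp_rw [hscale]
  rw [Measure.integral_comp_smul_of_nonneg volume (fun x => max (1 - ‖x‖ ^ 2) 0 ^ p) √a
      (hR := sqrt_nonneg a),
    finrank_euclideanSpace, EuclideanSpace.integral_max_one_sub_norm_sq_rpow ι hp, smul_eq_mul,
    hdet, div_eq_mul_inv π, mul_rpow pi_pos.le (inv_nonneg.2 ha.le)]
  ring

theorem integral_comp_dotProduct_self {ι F : Type*} [Fintype ι] [NormedAddCommGroup F]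
    [NormedSpace ℝ F] (f : ℝ → F) :
    ∫ x : ι → ℝ, f (x ⬝ᵥ x) = ∫ x : EuclideanSpace ℝ ι, f (‖x‖ ^ 2) := by
  rw [← (PiLp.volume_preserving_ofLp ι).integral_comp
    (MeasurableEquiv.toLp 2 (ι → ℝ)).symm.measurableEmbedding]
  congr 1 with x
  rw [EuclideanSpace.norm_sq_eq]
  simp [dotProduct, sq]

theorem integral_comp_mulVec {ι F : Type*} [Fintype ι] [DecidableEq ι] [NormedAddCommGroup F]
    [NormedSpace ℝ F] {A : Matrix ι ι ℝ} (hA : A.det ≠ 0) (f : (ι → ℝ) → F) :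
    ∫ x, f (A *ᵥ x) = |A.det|⁻¹ • ∫ x, f x := by
  have hL : LinearMap.det (toLin' A) ≠ 0 := by rwa [LinearMap.det_toLin']
  have he : MeasurableEmbedding (toLin' A) :=
    ((toLin' A).equivOfDetNeZero hL).toContinuousLinearEquiv.toHomeomorph.measurableEmbedding
  simp_rw [← toLin'_apply]
  rw [← he.integral_map, Real.map_matrix_volume_pi_eq_smul_volume_pi hA, integral_smul_measure,
    ENNReal.toReal_ofReal (abs_nonneg _), abs_inv]

open scoped MatrixOrder in
theorem Matrix.PosDef.exists_inv_quadratic_form_eq_dotProduct_self {ι : Type*} [Fintype ι]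
    [DecidableEq ι] {S : Matrix ι ι ℝ} (hS : S.PosDef) :
    ∃ B : Matrix ι ι ℝ, B.det ^ 2 = S.det⁻¹ ∧ ∀ x, x ⬝ᵥ (S⁻¹ *ᵥ x) = (B *ᵥ x) ⬝ᵥ (B *ᵥ x) := by
  obtain ⟨B, hB⟩ := CStarAlgebra.nonneg_iff_eq_star_mul_self.mp hS.inv.posSemidef.nonneg
  refine ⟨B, ?_, fun x => ?_⟩
  · rw [← Ring.inverse_eq_inv', ← det_nonsing_inv, hB, star_eq_conjTranspose, det_mul,
      det_conjTranspose, star_trivial, sq]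
  · rw [hB, star_eq_conjTranspose, conjTranspose_eq_transpose_of_trivial, ← mulVec_mulVec,
      dotProduct_mulVec, vecMul_transpose]

theorem qexp_neg_div (q t c : ℝ) :
    qexp q (-t / c) = max (1 - (1 - q) / c * t) 0 ^ (1 / (1 - q)) := by
  rw [qexp]
  ring_nf

theorem qGaussian_normalization_general (n : ℕ) (q : ℝ) (hq1 : q < 1)
    (S : Matrix (Fin n) (Fin n) ℝ) (hS : S.PosDef) :
    ∫ x : Fin n → ℝ,
        qexp q (-(x ⬝ᵥ (S⁻¹ *ᵥ x)) / (((n : ℝ) + 4) - ((n : ℝ) + 2) * q)) =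
      S.det ^ ((1 : ℝ) / 2) *
        (π * (((n : ℝ) + 4) - ((n : ℝ) + 2) * q) / (1 - q)) ^ ((n : ℝ) / 2) *
        (Real.Gamma ((2 - q) / (1 - q)) /
          Real.Gamma ((2 - q) / (1 - q) + (n : ℝ) / 2)) := by
  set c : ℝ := ((n : ℝ) + 4) - ((n : ℝ) + 2) * q
  have hc : 0 < c := by nlinarith [(n.cast_nonneg : (0 : ℝ) ≤ n)]
  have hq : 0 < 1 - q := sub_pos.2 hq1
  obtain ⟨B, hBdet, hB⟩ := hS.exists_inv_quadratic_form_eq_dotProduct_self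
  have hB0 : B.det ≠ 0 := fun h => hS.det_pos.ne (by simpa [h] using hBdet)
  have hBabs : |B.det|⁻¹ = S.det ^ ((1 : ℝ) / 2) := by
    rw [← sqrt_eq_rpow, ← sqrt_sq_eq_abs, hBdet, sqrt_inv, inv_inv]
  have hexp : (2 - q) / (1 - q) = 1 / (1 - q) + 1 := by field_simp; ring
  simp_rw [qexp_neg_div, hB]
  rw [integral_comp_mulVec hB0 fun y => max (1 - (1 - q) / c * (y ⬝ᵥ y)) 0 ^ (1 / (1 - q)),
    integral_comp_dotProduct_self fun t => max (1 - (1 - q) / c * t) 0 ^ (1 / (1 - q)),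
    EuclideanSpace.integral_max_one_sub_mul_norm_sq_rpow (Fin n) (by positivity) (by positivity),
    Fintype.card_fin, hBabs, hexp, smul_eq_mul, div_div_eq_mul_div]
  ring

/-- Normalization of the multivariate `q`-Gaussian: for `0 ≤ q < 1` and a symmetric
positive definite `Σ`, the integral of
`exp_q(-xᵀ Σ⁻¹ x / ((n+4)-(n+2)q))` over `ℝⁿ` equals
`det(Σ)^(1/2) (π((n+4)-(n+2)q)/(1-q))^(n/2) Γ((2-q)/(1-q)) / Γ((2-q)/(1-q)+n/2)`. -/
theorem qGaussian_normalization (n : ℕ) (q : ℝ) (hq0 : 0 ≤ q) (hq1 : q < 1)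
    (S : Matrix (Fin n) (Fin n) ℝ) (hS : S.PosDef) :
    ∫ x : Fin n → ℝ,
        qexp q (-(x ⬝ᵥ (S⁻¹ *ᵥ x)) / (((n : ℝ) + 4) - ((n : ℝ) + 2) * q)) =
      S.det ^ ((1 : ℝ) / 2) *
        (π * (((n : ℝ) + 4) - ((n : ℝ) + 2) * q) / (1 - q)) ^ ((n : ℝ) / 2) *
        (Real.Gamma ((2 - q) / (1 - q)) /
          Real.Gamma ((2 - q) / (1 - q) + (n : ℝ) / 2)) :=
  qGaussian_normalization_general n q hq1 S hS
end

section
/- The covariance of the multivariate q-Gaussian: for 0 ≤ q < 1, μ ∈ ℝ^n, and symmetric positive definite Σ ∈ ℝ^{n×n}, the density φ of N_q(μ,Σ) satisfies ∫_{ℝ^n} (x-μ)(x-μ)ᵀ φ(x) dx = Σ. -/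
open Real MeasureTheory Matrix

/-- Normalizing constant of the `n`-dimensional `q`-Gaussian `N_q(μ, Σ)`. -/
noncomputable def qGaussZ (n : ℕ) (q : ℝ) (S : Matrix (Fin n) (Fin n) ℝ) : ℝ :=
  S.det ^ ((1 : ℝ) / 2) *
    (π * (((n : ℝ) + 4) - ((n : ℝ) + 2) * q) / (1 - q)) ^ ((n : ℝ) / 2) *
    (Real.Gamma ((2 - q) / (1 - q)) / Real.Gamma ((2 - q) / (1 - q) + (n : ℝ) / 2))

/-- Density of the `n`-dimensional `q`-Gaussian `N_q(μ, Σ)`. -/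
noncomputable def qGaussDensity (n : ℕ) (q : ℝ) (μ : Fin n → ℝ)
    (S : Matrix (Fin n) (Fin n) ℝ) (x : Fin n → ℝ) : ℝ :=
  (1 / qGaussZ n q S) *
    qexp q (-((x - μ) ⬝ᵥ (S⁻¹ *ᵥ (x - μ))) / (((n : ℝ) + 4) - ((n : ℝ) + 2) * q))

section Aux

open Set


lemma qaux_cont_rpow {p : ℝ} (hp : 0 < p) : Continuous fun t : ℝ => t ^ p := by
  rw [continuous_iff_continuousAt]
  intro x
  exact Real.continuousAt_rpow_const x p (Or.inr hp.le)

lemma qaux_cont_g {c p : ℝ} (hp : 0 < p) :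
    Continuous fun t : ℝ => (max (1 - c * t) 0) ^ p :=
  (qaux_cont_rpow hp).comp (((continuous_const.sub (continuous_const.mul continuous_id)).max
    continuous_const))

lemma qaux_beta {a b : ℝ} (ha : 0 < a) (hb : 0 < b) :
    ∫ t in (0:ℝ)..1, t ^ (a - 1) * (1 - t) ^ (b - 1) = Gamma a * Gamma b / Gamma (a + b) := by
  have h := Complex.Gamma_mul_Gamma_eq_betaIntegral (s := (a:ℂ)) (t := (b:ℂ))
    (by simpa using ha) (by simpa using hb)
  rw [Complex.betaIntegral] at h
  have hint : (∫ x : ℝ in (0:ℝ)..1, (x:ℂ) ^ ((a:ℂ) - 1) * (1 - (x:ℂ)) ^ ((b:ℂ) - 1))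
      = ((∫ t in (0:ℝ)..1, t ^ (a - 1) * (1 - t) ^ (b - 1) : ℝ) : ℂ) := by
    rw [← intervalIntegral.integral_ofReal]
    apply intervalIntegral.integral_congr
    intro x hx
    rw [Set.uIcc_of_le (by norm_num : (0:ℝ) ≤ 1)] at hx
    have hx0 : 0 ≤ x := hx.1
    have hx1 : 0 ≤ 1 - x := by linarith [hx.2]
    show (x:ℂ) ^ ((a:ℂ) - 1) * ((1:ℂ) - (x:ℂ)) ^ ((b:ℂ) - 1)
        = ((x ^ (a - 1) * (1 - x) ^ (b - 1) : ℝ) : ℂ)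
    rw [show ((a:ℂ) - 1) = ((a - 1 : ℝ) : ℂ) by push_cast; ring,
      show ((1:ℂ) - (x:ℂ)) = ((1 - x : ℝ) : ℂ) by push_cast; ring,
      show ((b:ℂ) - 1) = ((b - 1 : ℝ) : ℂ) by push_cast; ring,
      ← Complex.ofReal_cpow hx0, ← Complex.ofReal_cpow hx1, ← Complex.ofReal_mul]
  rw [hint, ← Complex.ofReal_add, Complex.Gamma_ofReal, Complex.Gamma_ofReal,
    Complex.Gamma_ofReal, ← Complex.ofReal_mul, ← Complex.ofReal_mul] at h
  have h' := Complex.ofReal_inj.mp h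
  have hG : Gamma (a + b) ≠ 0 := (Real.Gamma_pos_of_pos (by linarith)).ne'
  field_simp
  linarith [h']

lemma qaux_integrable {n : ℕ} {c p : ℝ} (hc : 0 < c) (hp : 0 < p)
    {F : (Fin n → ℝ) → ℝ} (hF : Continuous F) :
    Integrable (fun v : Fin n → ℝ => F v * (max (1 - c * ∑ m, v m ^ 2) 0) ^ p) := by
  have hcont : Continuous fun v : Fin n → ℝ => F v * (max (1 - c * ∑ m, v m ^ 2) 0) ^ p :=
    hF.mul ((qaux_cont_g hp).comp (continuous_finset_sum _ fun m _ => (continuous_apply m).pow 2))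
  apply hcont.integrable_of_hasCompactSupport
  apply HasCompactSupport.intro (isCompact_closedBall (0 : Fin n → ℝ) (Real.sqrt c⁻¹))
  intro v hv
  have hex : ∃ m, Real.sqrt c⁻¹ < ‖v m‖ := by
    by_contra hcon
    push_neg at hcon
    exact hv (mem_closedBall_zero_iff.2 ((pi_norm_le_iff_of_nonneg (Real.sqrt_nonneg _)).2 hcon))
  obtain ⟨m, hm⟩ := hex
  have h0 : Real.sqrt c⁻¹ ^ 2 = c⁻¹ := Real.sq_sqrt (inv_nonneg.2 hc.le)
  have h1 : c⁻¹ < v m ^ 2 := by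
    rw [← h0, ← sq_abs (v m)]
    have := Real.sqrt_nonneg c⁻¹
    rw [Real.norm_eq_abs] at hm
    nlinarith
  have h2 : v m ^ 2 ≤ ∑ m', v m' ^ 2 :=
    Finset.single_le_sum (fun i _ => sq_nonneg (v i)) (Finset.mem_univ m)
  have h3 : 1 - c * ∑ m', v m' ^ 2 ≤ 0 := by
    have hinv : c * c⁻¹ = 1 := mul_inv_cancel₀ hc.ne'
    nlinarith
  simp [max_eq_right h3, Real.zero_rpow hp.ne']

lemma qaux_radial {n : ℕ} (hn : 0 < n) {c p : ℝ} (hc : 0 < c) (hp : 0 < p) :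
    ∫ y in Ioi (0:ℝ), y ^ (n - 1) * (y ^ 2 * (max (1 - c * y ^ 2) 0) ^ p)
      = c ^ (-((n:ℝ)/2 + 1)) *
        (Gamma ((n:ℝ)/2 + 1) * Gamma (p + 1) / Gamma ((n:ℝ)/2 + 1 + (p + 1))) / 2 := by
  have hn2 : (0:ℝ) < (n:ℝ)/2 := by positivity
  have h1 : ∫ y in Ioi (0:ℝ), y ^ (n - 1) * (y ^ 2 * (max (1 - c * y ^ 2) 0) ^ p)
      = ∫ t in Ioi (0:ℝ), t ^ ((n:ℝ)/2) * (max (1 - c * t) 0) ^ p / 2 := by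
    rw [← integral_comp_rpow_Ioi_of_pos
      (g := fun t => t ^ ((n:ℝ)/2) * (max (1 - c * t) 0) ^ p / 2) (p := 2) two_pos]
    apply setIntegral_congr_fun measurableSet_Ioi
    intro x hx
    have hx0 : (0:ℝ) < x := hx
    have e1 : x ^ ((2:ℝ)) = x ^ (2:ℕ) := by
      rw [← Real.rpow_natCast x 2]; norm_num
    have e2 : ((2:ℝ) - 1) = 1 := by norm_num
    have e3 : (x ^ (2:ℕ) : ℝ) ^ ((n:ℝ)/2) = x ^ n := by
      rw [← e1, ← Real.rpow_mul hx0.le, show (2:ℝ) * ((n:ℝ)/2) = (n:ℝ) by ring,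
        Real.rpow_natCast]
    simp only [smul_eq_mul, e2, Real.rpow_one, e1, e3]
    have e4 : x ^ (n - 1) * x ^ (2:ℕ) = x * x ^ n := by
      rw [← pow_add, ← pow_succ']
      congr 1
      omega
    calc x ^ (n - 1) * (x ^ (2:ℕ) * (max (1 - c * x ^ (2:ℕ)) 0) ^ p)
        = (x ^ (n-1) * x ^ (2:ℕ)) * (max (1 - c * x ^ (2:ℕ)) 0) ^ p := by ring
      _ = (x * x ^ n) * (max (1 - c * x ^ (2:ℕ)) 0) ^ p := by rw [e4]
      _ = 2 * x * (x ^ n * (max (1 - c * x ^ (2:ℕ)) 0) ^ p / 2) := by ring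
  rw [h1]
  have hthis := integral_comp_mul_left_Ioi
      (g := fun u => u ^ ((n:ℝ)/2) * (max (1 - u) 0) ^ p) (a := 0) hc
  rw [mul_zero] at hthis
  have h2 : ∫ t in Ioi (0:ℝ), t ^ ((n:ℝ)/2) * (max (1 - c * t) 0) ^ p / 2
      = (c ^ (-((n:ℝ)/2)) / 2) * (c⁻¹ • ∫ u in Ioi (0:ℝ),
          u ^ ((n:ℝ)/2) * (max (1 - u) 0) ^ p) := by
    rw [← hthis, ← integral_const_mul]
    apply setIntegral_congr_fun measurableSet_Ioi
    intro t ht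
    have ht0 : (0:ℝ) < t := ht
    have e5 : (c * t) ^ ((n:ℝ)/2) = c ^ ((n:ℝ)/2) * t ^ ((n:ℝ)/2) :=
      Real.mul_rpow hc.le ht0.le
    have e6 : c ^ (-((n:ℝ)/2)) * c ^ ((n:ℝ)/2) = 1 := by
      rw [← Real.rpow_add hc]; norm_num
    show t ^ ((n:ℝ)/2) * (max (1 - c * t) 0) ^ p / 2
        = c ^ (-((n:ℝ)/2)) / 2 * ((c * t) ^ ((n:ℝ)/2) * (max (1 - c * t) 0) ^ p)
    rw [e5]
    calc t ^ ((n:ℝ)/2) * (max (1 - c * t) 0) ^ p / 2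
        = (c ^ (-((n:ℝ)/2)) * c ^ ((n:ℝ)/2)) * t ^ ((n:ℝ)/2) * (max (1 - c * t) 0) ^ p / 2 := by
          rw [e6]; ring
      _ = c ^ (-((n:ℝ)/2)) / 2 * (c ^ ((n:ℝ)/2) * t ^ ((n:ℝ)/2) * (max (1 - c * t) 0) ^ p) := by
          ring
  rw [h2, smul_eq_mul]
  have hHcont : Continuous fun u : ℝ => u ^ ((n:ℝ)/2) * (max (1 - u) 0) ^ p :=
    (qaux_cont_rpow hn2).mul
      ((qaux_cont_rpow hp).comp ((continuous_const.sub continuous_id).max continuous_const))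
  have hzero : Set.EqOn (fun u : ℝ => u ^ ((n:ℝ)/2) * (max (1 - u) 0) ^ p) 0 (Ioi (1:ℝ)) := by
    intro u hu
    have : (1:ℝ) - u ≤ 0 := by simp only [mem_Ioi] at hu; linarith
    simp [max_eq_right this, Real.zero_rpow hp.ne']
  have h3 : ∫ u in Ioi (0:ℝ), u ^ ((n:ℝ)/2) * (max (1 - u) 0) ^ p
      = ∫ u in Ioc (0:ℝ) 1, u ^ ((n:ℝ)/2) * (max (1 - u) 0) ^ p := by
    rw [← Set.Ioc_union_Ioi_eq_Ioi (zero_le_one (α := ℝ)),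
      setIntegral_union (Set.Ioc_disjoint_Ioi le_rfl) measurableSet_Ioi
        (hHcont.integrableOn_Ioc) ((integrableOn_congr_fun hzero measurableSet_Ioi).2
          (integrableOn_zero)),
      setIntegral_congr_fun measurableSet_Ioi hzero]
    simp
  have h4 : ∫ u in Ioc (0:ℝ) 1, u ^ ((n:ℝ)/2) * (max (1 - u) 0) ^ p
      = Gamma ((n:ℝ)/2 + 1) * Gamma (p + 1) / Gamma ((n:ℝ)/2 + 1 + (p + 1)) := by
    rw [setIntegral_congr_fun measurableSet_Ioc
      (g := fun u : ℝ => u ^ ((n:ℝ)/2) * (1 - u) ^ p)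
      (fun u hu => by rw [max_eq_left (by linarith [hu.2] : (0:ℝ) ≤ 1 - u)]),
      ← intervalIntegral.integral_of_le zero_le_one]
    have hb2 := qaux_beta (a := (n:ℝ)/2 + 1) (b := p + 1) (by positivity) (by positivity)
    simpa using hb2
  rw [h3, h4]
  rw [show -((n:ℝ)/2 + 1) = -((n:ℝ)/2) + (-1) by ring, Real.rpow_add hc, Real.rpow_neg_one]
  ring

lemma qaux_offdiag {n : ℕ} {k l : Fin n} (hkl : k ≠ l) {c p : ℝ} (hp : 0 < p) :
    ∫ v : Fin n → ℝ, v k * v l * (max (1 - c * ∑ m, v m ^ 2) 0) ^ p = 0 := by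
  classical
  have hmp : MeasurePreserving (fun (a : Fin n → ℝ) (i : Fin n) =>
      (fun (x : ℝ) => if i = k then -x else x) (a i)) volume volume := by
    exact volume_preserving_pi (f := fun (i : Fin n) (x : ℝ) => if i = k then -x else x)
      (fun i => by
        by_cases h : i = k
        · simp only [h, if_true]
          exact Measure.measurePreserving_neg volume
        · simp only [h, if_false]
          exact MeasurePreserving.id volume)
  have hFcont : Continuous (fun v : Fin n → ℝ =>
      v k * v l * (max (1 - c * ∑ m, v m ^ 2) 0) ^ p) :=
    (((continuous_apply k).mul (continuous_apply l))).mul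
      ((qaux_cont_g hp).comp (continuous_finset_sum _ fun m _ => (continuous_apply m).pow 2))
  have key : (∫ v : Fin n → ℝ, v k * v l * (max (1 - c * ∑ m, v m ^ 2) 0) ^ p)
      = ∫ v : Fin n → ℝ, -(v k * v l * (max (1 - c * ∑ m, v m ^ 2) 0) ^ p) := by
    calc (∫ v : Fin n → ℝ, v k * v l * (max (1 - c * ∑ m, v m ^ 2) 0) ^ p)
        = ∫ v, (fun w : Fin n → ℝ => w k * w l * (max (1 - c * ∑ m, w m ^ 2) 0) ^ p) v
            ∂(Measure.map (fun (a : Fin n → ℝ) (i : Fin n) =>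
              (fun (x : ℝ) => if i = k then -x else x) (a i)) volume) := by rw [hmp.map_eq]
      _ = ∫ v : Fin n → ℝ, (fun w : Fin n → ℝ =>
            w k * w l * (max (1 - c * ∑ m, w m ^ 2) 0) ^ p)
            (fun i => if i = k then -v i else v i) := by
          rw [integral_map hmp.measurable.aemeasurable hFcont.aestronglyMeasurable]
      _ = ∫ v : Fin n → ℝ, -(v k * v l * (max (1 - c * ∑ m, v m ^ 2) 0) ^ p) := by
          congr 1
          ext v
          have h3 : ∑ m, (if m = k then -v m else v m) ^ 2 = ∑ m, v m ^ 2 :=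
            Finset.sum_congr rfl fun m _ => by split <;> ring
          simp only
          rw [h3]
          simp only [if_true]
          rw [if_neg (Ne.symm hkl)]
          ring
  rw [integral_neg] at key
  linarith

lemma qaux_moment {n : ℕ} (k : Fin n) {c p : ℝ} (hc : 0 < c) (hp : 0 < p) :
    ∫ v : Fin n → ℝ, v k ^ 2 * (max (1 - c * ∑ m, v m ^ 2) 0) ^ p
      = (Real.sqrt π ^ n / Gamma ((n:ℝ)/2 + 1)) *
        (c ^ (-((n:ℝ)/2 + 1)) *
          (Gamma ((n:ℝ)/2 + 1) * Gamma (p + 1) / Gamma ((n:ℝ)/2 + 1 + (p + 1))) / 2) := by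
  classical
  have hn : 0 < n := k.pos
  haveI : Nonempty (Fin n) := ⟨k⟩
  have hswap : ∀ l : Fin n,
      (∫ v : Fin n → ℝ, v l ^ 2 * (max (1 - c * ∑ m, v m ^ 2) 0) ^ p)
        = ∫ v : Fin n → ℝ, v k ^ 2 * (max (1 - c * ∑ m, v m ^ 2) 0) ^ p := by
    intro l
    have hmp := volume_preserving_arrowCongr' (Equiv.swap l k) (MeasurableEquiv.refl ℝ)
      (MeasurePreserving.id _)
    rw [← hmp.integral_comp'
      (fun v : Fin n → ℝ => v l ^ 2 * (max (1 - c * ∑ m, v m ^ 2) 0) ^ p)]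
    congr 1
    ext v
    have happ : ∀ m : Fin n,
        (MeasurableEquiv.arrowCongr' (Equiv.swap l k) (MeasurableEquiv.refl ℝ) v) m
          = v (Equiv.swap l k m) := fun m => rfl
    have hsum'' : ∑ m : Fin n, v (Equiv.swap l k m) ^ 2 = ∑ m : Fin n, v m ^ 2 :=
      Equiv.sum_comp (Equiv.swap l k) (fun m => v m ^ 2)
    simp only [happ, Equiv.swap_apply_left, hsum'']
  have hintg : ∀ l : Fin n, Integrable
      (fun v : Fin n → ℝ => v l ^ 2 * (max (1 - c * ∑ m, v m ^ 2) 0) ^ p) :=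
    fun l => qaux_integrable hc hp ((continuous_apply l).pow 2)
  have hsum : (n:ℝ) * ∫ v : Fin n → ℝ, v k ^ 2 * (max (1 - c * ∑ m, v m ^ 2) 0) ^ p
      = ∫ v : Fin n → ℝ, (∑ l, v l ^ 2) * (max (1 - c * ∑ m, v m ^ 2) 0) ^ p := by
    rw [show (∫ v : Fin n → ℝ, (∑ l, v l ^ 2) * (max (1 - c * ∑ m, v m ^ 2) 0) ^ p)
        = ∫ v : Fin n → ℝ, ∑ l, v l ^ 2 * (max (1 - c * ∑ m, v m ^ 2) 0) ^ p by
      congr 1; ext v; rw [Finset.sum_mul]]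
    rw [integral_finset_sum _ fun l _ => hintg l]
    rw [Finset.sum_congr rfl fun l _ => hswap l, Finset.sum_const, Finset.card_univ,
      Fintype.card_fin, nsmul_eq_mul]
  haveI : Nontrivial (EuclideanSpace ℝ (Fin n)) := by
    refine nontrivial_of_ne (EuclideanSpace.single k 1) 0 ?_
    intro h
    have := congrArg (· k) h
    rw [EuclideanSpace.single_apply] at this
    simp at this
  have heq := (EuclideanSpace.volume_preserving_symm_measurableEquiv_toLp (Fin n)).integral_comp'
    (fun v : Fin n → ℝ => (∑ l, v l ^ 2) * (max (1 - c * ∑ m, v m ^ 2) 0) ^ p)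
  have hnorm : ∀ x : EuclideanSpace ℝ (Fin n), (∑ m : Fin n, x m ^ 2) = ‖x‖ ^ 2 := by
    intro x
    rw [EuclideanSpace.norm_eq, Real.sq_sqrt (by positivity)]
    apply Finset.sum_congr rfl
    intro m _
    rw [Real.norm_eq_abs, sq_abs]
  have heval : ∀ x : EuclideanSpace ℝ (Fin n),
      (∑ l : Fin n, ((MeasurableEquiv.toLp 2 (Fin n → ℝ)).symm x) l ^ 2) *
        (max (1 - c * ∑ m : Fin n, ((MeasurableEquiv.toLp 2 (Fin n → ℝ)).symm x) m ^ 2) 0) ^ p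
      = (fun r : ℝ => r ^ 2 * (max (1 - c * r ^ 2) 0) ^ p) ‖x‖ := by
    intro x
    have hc2 : ∀ m : Fin n, ((MeasurableEquiv.toLp 2 (Fin n → ℝ)).symm x) m = x m := fun m => rfl
    simp only [hc2, hnorm x]
  have hrad := integral_fun_norm_addHaar (volume : Measure (EuclideanSpace ℝ (Fin n)))
    (fun r : ℝ => r ^ 2 * (max (1 - c * r ^ 2) 0) ^ p)
  simp only [finrank_euclideanSpace, Fintype.card_fin, smul_eq_mul, nsmul_eq_mul] at hrad
  have hvol : (volume (Metric.ball (0 : EuclideanSpace ℝ (Fin n)) 1)).toReal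
      = Real.sqrt π ^ n / Gamma ((n:ℝ)/2 + 1) := by
    rw [EuclideanSpace.volume_ball]
    simp only [Fintype.card_fin, ENNReal.ofReal_one, one_pow, one_mul]
    refine ENNReal.toReal_ofReal ?_
    have hg := Real.Gamma_pos_of_pos (show (0:ℝ) < (n:ℝ)/2 + 1 by positivity)
    exact div_nonneg (pow_nonneg (Real.sqrt_nonneg _) _) hg.le
  have hchain : (n:ℝ) * ∫ v : Fin n → ℝ, v k ^ 2 * (max (1 - c * ∑ m, v m ^ 2) 0) ^ p
      = (n:ℝ) * ((Real.sqrt π ^ n / Gamma ((n:ℝ)/2 + 1)) *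
          (c ^ (-((n:ℝ)/2 + 1)) *
            (Gamma ((n:ℝ)/2 + 1) * Gamma (p + 1) / Gamma ((n:ℝ)/2 + 1 + (p + 1))) / 2)) := by
    rw [hsum, ← heq]
    rw [show (∫ x : EuclideanSpace ℝ (Fin n),
        (∑ l : Fin n, ((MeasurableEquiv.toLp 2 (Fin n → ℝ)).symm x) l ^ 2) *
          (max (1 - c * ∑ m : Fin n, ((MeasurableEquiv.toLp 2 (Fin n → ℝ)).symm x) m ^ 2) 0) ^ p)
        = ∫ x : EuclideanSpace ℝ (Fin n),
            (fun r : ℝ => r ^ 2 * (max (1 - c * r ^ 2) 0) ^ p) ‖x‖ by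
      congr 1; ext x; exact heval x]
    rw [hrad, measureReal_def, hvol, qaux_radial hn hc hp]
  have hncast : (n:ℝ) ≠ 0 := Nat.cast_ne_zero.2 hn.ne'
  exact mul_left_cancel₀ hncast hchain

end Aux

open Set in
/-- The covariance of the multivariate `q`-Gaussian `N_q(μ, Σ)` is `Σ`
(stated entrywise: `∫ (x-μ)(x-μ)ᵀ φ(x) dx = Σ`). -/
theorem qGaussian_covariance (n : ℕ) (q : ℝ) (hq0 : 0 ≤ q) (hq1 : q < 1)
    (μ : Fin n → ℝ) (S : Matrix (Fin n) (Fin n) ℝ) (hS : S.PosDef) :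
    ∀ i j : Fin n,
      (∫ x : Fin n → ℝ, (x i - μ i) * (x j - μ j) * qGaussDensity n q μ S x) =
        S i j := by
  classical
  intro i j
  have hn : 0 < n := i.pos
  have h1q : (0:ℝ) < 1 - q := by linarith
  set ν : ℝ := ((n:ℝ) + 4) - ((n:ℝ) + 2) * q with hν
  have hνpos : 0 < ν := by
    have hn0 : (0:ℝ) ≤ (n:ℝ) := Nat.cast_nonneg n
    have : ν = (n:ℝ) * (1 - q) + (4 - 2*q) := by rw [hν]; ring
    nlinarith
  set c : ℝ := (1 - q) / ν with hc
  have hcpos : 0 < c := div_pos h1q hνpos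
  set p : ℝ := 1 / (1 - q) with hp
  have hppos : 0 < p := by rw [hp]; positivity
  set Z : ℝ := qGaussZ n q S with hZdef
  -- matrix facts
  have hdS : 0 < S.det := hS.det_pos
  open scoped MatrixOrder in set A : Matrix (Fin n) (Fin n) ℝ := CFC.sqrt S with hA
  have hAmul : A * A = S := by open scoped MatrixOrder in exact CFC.sqrt_mul_sqrt_self S hS.posSemidef.nonneg
  have hAherm : A.IsHermitian := (show A.PosSemidef by open scoped MatrixOrder in exact (CFC.sqrt_nonneg S).posSemidef).1
  have hAsymm : Aᵀ = A := by
    rw [← Matrix.conjTranspose_eq_transpose_of_trivial]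
    exact hAherm
  have hdA2 : A.det * A.det = S.det := by rw [← Matrix.det_mul, hAmul]
  have hdAne : A.det ≠ 0 := by
    intro h
    rw [h, zero_mul] at hdA2
    exact hdS.ne hdA2
  have hdAnonneg : 0 ≤ A.det := by
    rw [hAherm.det_eq_prod_eigenvalues]
    apply Finset.prod_nonneg
    intro m _
    simpa using (show A.PosSemidef by open scoped MatrixOrder in exact (CFC.sqrt_nonneg S).posSemidef).eigenvalues_nonneg m
  have hdA : 0 < A.det := lt_of_le_of_ne hdAnonneg (Ne.symm hdAne)
  have hAu : IsUnit A.det := hdAne.isUnit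
  have hSinv : S⁻¹ = A⁻¹ * A⁻¹ := by rw [← hAmul, Matrix.mul_inv_rev]
  have hAAinv : A * A⁻¹ = 1 := Matrix.mul_nonsing_inv A hAu
  have hAinvA : A⁻¹ * A = 1 := Matrix.nonsing_inv_mul A hAu
  have hquad : ∀ v : Fin n → ℝ, (A *ᵥ v) ⬝ᵥ (S⁻¹ *ᵥ (A *ᵥ v)) = ∑ m, v m ^ 2 := by
    intro v
    have e1 : S⁻¹ *ᵥ (A *ᵥ v) = A⁻¹ *ᵥ v := by
      rw [hSinv, Matrix.mulVec_mulVec, Matrix.mul_assoc, hAinvA, Matrix.mul_one]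
    rw [e1]
    have e2 : A *ᵥ v = v ᵥ* A := by
      conv_lhs => rw [← hAsymm]
      exact Matrix.mulVec_transpose A v
    rw [e2, ← Matrix.dotProduct_mulVec, Matrix.mulVec_mulVec, hAAinv, Matrix.one_mulVec]
    simp only [dotProduct, pow_two]
  -- density rewrite
  have hdens : ∀ x : Fin n → ℝ, qGaussDensity n q μ S x
      = (1 / Z) * (max (1 - c * ((x - μ) ⬝ᵥ (S⁻¹ *ᵥ (x - μ)))) 0) ^ p := by
    intro x
    have harg : 1 + (1 - q) * (-((x - μ) ⬝ᵥ (S⁻¹ *ᵥ (x - μ))) / (((n:ℝ)+4) - ((n:ℝ)+2)*q))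
        = 1 - c * ((x - μ) ⬝ᵥ (S⁻¹ *ᵥ (x - μ))) := by
      rw [← hν, hc]
      field_simp
      ring
    unfold qGaussDensity qexp
    rw [← hZdef, harg, ← hp]
  -- translation
  have htrans : (∫ x : Fin n → ℝ, (x i - μ i) * (x j - μ j) * qGaussDensity n q μ S x)
      = (1/Z) * ∫ y : Fin n → ℝ, y i * y j * (max (1 - c * (y ⬝ᵥ (S⁻¹ *ᵥ y))) 0) ^ p := by
    have hstep : (∫ x : Fin n → ℝ, (x i - μ i) * (x j - μ j) * qGaussDensity n q μ S x)
        = ∫ x : Fin n → ℝ, (fun y : Fin n → ℝ =>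
            (1/Z) * (y i * y j * (max (1 - c * (y ⬝ᵥ (S⁻¹ *ᵥ y))) 0) ^ p)) (x - μ) := by
      congr 1
      ext x
      rw [hdens x]
      simp only [Pi.sub_apply]
      ring
    rw [hstep, integral_sub_right_eq_self (μ := (volume : Measure (Fin n → ℝ)))
      (fun y : Fin n → ℝ =>
        (1/Z) * (y i * y j * (max (1 - c * (y ⬝ᵥ (S⁻¹ *ᵥ y))) 0) ^ p)) μ,
      integral_const_mul]
  -- change of variables
  set Φ : (Fin n → ℝ) → ℝ :=
    fun y => y i * y j * (max (1 - c * (y ⬝ᵥ (S⁻¹ *ᵥ y))) 0) ^ p with hΦ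
  have hqfcont : Continuous fun y : Fin n → ℝ => y ⬝ᵥ (S⁻¹ *ᵥ y) := by
    show Continuous fun y : Fin n → ℝ => ∑ m, y m * ∑ l, S⁻¹ m l * y l
    exact continuous_finset_sum _ fun m _ => (continuous_apply m).mul
      (continuous_finset_sum _ fun l _ => (continuous_const.mul (continuous_apply l)))
  have hΦcont : Continuous Φ :=
    (((continuous_apply i).mul (continuous_apply j))).mul
      ((qaux_cont_g hppos).comp hqfcont)
  have hTcont : Continuous (Matrix.toLin' A) := LinearMap.continuous_on_pi _
  have hmapeq : Measure.map (Matrix.toLin' A) volume = ENNReal.ofReal |A.det⁻¹| • volume :=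
    Real.map_matrix_volume_pi_eq_smul_volume_pi hdAne
  have hcov : ∫ y : Fin n → ℝ, Φ y = A.det * ∫ v : Fin n → ℝ, Φ (A *ᵥ v) := by
    have h1 : ∫ y, Φ y ∂(Measure.map (Matrix.toLin' A) volume)
        = ∫ v, Φ (Matrix.toLin' A v) :=
      integral_map hTcont.measurable.aemeasurable hΦcont.aestronglyMeasurable
    rw [hmapeq, integral_smul_measure, ENNReal.toReal_ofReal (by positivity)] at h1
    have h2 : ∀ v, Matrix.toLin' A v = A *ᵥ v := fun v => rfl
    rw [abs_inv, abs_of_pos hdA] at h1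
    simp only [h2, smul_eq_mul] at h1
    rw [← h1, ← mul_assoc, mul_inv_cancel₀ hdA.ne', one_mul]
  -- expansion
  have hexp : ∀ v : Fin n → ℝ, Φ (A *ᵥ v)
      = ∑ k : Fin n, ∑ l : Fin n,
          (A i k * A j l * (v k * v l)) * (max (1 - c * ∑ m, v m ^ 2) 0) ^ p := by
    intro v
    rw [hΦ]
    simp only
    rw [hquad v]
    have hmv : ∀ r : Fin n, (A *ᵥ v) r = ∑ s, A r s * v s := fun r => rfl
    rw [hmv i, hmv j, Finset.sum_mul_sum, Finset.sum_mul]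
    apply Finset.sum_congr rfl
    intro k _
    rw [Finset.sum_mul]
    apply Finset.sum_congr rfl
    intro l _
    ring
  have hint : ∫ v : Fin n → ℝ, Φ (A *ᵥ v)
      = ∑ k : Fin n, ∑ l : Fin n, A i k * A j l *
          ∫ v : Fin n → ℝ, v k * v l * (max (1 - c * ∑ m, v m ^ 2) 0) ^ p := by
    rw [show (fun v : Fin n → ℝ => Φ (A *ᵥ v)) = fun v => ∑ k : Fin n, ∑ l : Fin n,
        (A i k * A j l * (v k * v l)) * (max (1 - c * ∑ m, v m ^ 2) 0) ^ p from funext hexp]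
    rw [integral_finset_sum _ (fun k _ => integrable_finset_sum _ (fun l _ =>
      qaux_integrable (F := fun v => A i k * A j l * (v k * v l)) hcpos hppos
        (continuous_const.mul ((continuous_apply k).mul (continuous_apply l)))))]
    apply Finset.sum_congr rfl
    intro k _
    rw [integral_finset_sum _ (fun l _ => qaux_integrable (F := fun v => A i k * A j l * (v k * v l)) hcpos hppos
      (continuous_const.mul ((continuous_apply k).mul (continuous_apply l))))]
    apply Finset.sum_congr rfl
    intro l _
    rw [show (fun v : Fin n → ℝ => (A i k * A j l * (v k * v l)) *
        (max (1 - c * ∑ m, v m ^ 2) 0) ^ p)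
        = fun v => (A i k * A j l) * ((v k * v l) * (max (1 - c * ∑ m, v m ^ 2) 0) ^ p) from
      by ext v; ring]
    rw [integral_const_mul]
  -- evaluate the double sum
  set Jv : ℝ := (Real.sqrt π ^ n / Gamma ((n:ℝ)/2 + 1)) *
      (c ^ (-((n:ℝ)/2 + 1)) *
        (Gamma ((n:ℝ)/2 + 1) * Gamma (p + 1) / Gamma ((n:ℝ)/2 + 1 + (p + 1))) / 2) with hJv
  have hdiag : ∀ k : Fin n,
      (∫ v : Fin n → ℝ, v k * v k * (max (1 - c * ∑ m, v m ^ 2) 0) ^ p) = Jv := by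
    intro k
    rw [show (fun v : Fin n → ℝ => v k * v k * (max (1 - c * ∑ m, v m ^ 2) 0) ^ p)
        = fun v => v k ^ 2 * (max (1 - c * ∑ m, v m ^ 2) 0) ^ p from by
      ext v; ring]
    rw [qaux_moment k hcpos hppos, hJv]
  have hsum2 : (∑ k : Fin n, ∑ l : Fin n, A i k * A j l *
        ∫ v : Fin n → ℝ, v k * v l * (max (1 - c * ∑ m, v m ^ 2) 0) ^ p)
      = (∑ k : Fin n, A i k * A j k) * Jv := by
    rw [Finset.sum_mul]
    apply Finset.sum_congr rfl
    intro k _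
    rw [Finset.sum_eq_single_of_mem k (Finset.mem_univ k)
      (fun l _ hlk => by rw [qaux_offdiag (Ne.symm hlk) hppos, mul_zero])]
    rw [hdiag k]
  have hAS : (∑ k : Fin n, A i k * A j k) = S i j := by
    calc (∑ k : Fin n, A i k * A j k) = ∑ k : Fin n, A i k * A k j := by
          apply Finset.sum_congr rfl
          intro k _
          congr 1
          have h5 := congrFun (congrFun hAsymm k) j
          simpa using h5
      _ = (A * A) i j := (Matrix.mul_apply).symm
      _ = S i j := by rw [hAmul]
  -- Gamma and rpow bookkeeping
  have hrootS : S.det ^ ((1:ℝ)/2) = A.det := by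
    rw [← hdA2, show A.det * A.det = A.det ^ (2:ℕ) from (sq A.det).symm,
      ← Real.rpow_natCast A.det 2, ← Real.rpow_mul hdAnonneg]
    norm_num
  have hpq1 : (2 - q) / (1 - q) = p + 1 := by rw [hp]; field_simp; ring
  have hG1pos : (0:ℝ) < (n:ℝ)/2 + p + 1 := by
    have h6 : (0:ℝ) ≤ (n:ℝ)/2 := by positivity
    linarith [hppos]
  have hG1 : Gamma ((n:ℝ)/2 + 1 + (p + 1)) = ((n:ℝ)/2 + p + 1) * Gamma ((n:ℝ)/2 + p + 1) := by
    rw [show (n:ℝ)/2 + 1 + (p + 1) = ((n:ℝ)/2 + p + 1) + 1 by ring,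
      Real.Gamma_add_one hG1pos.ne']
  have hG2 : Gamma ((2 - q)/(1 - q) + (n:ℝ)/2) = Gamma ((n:ℝ)/2 + p + 1) := by
    rw [hpq1]
    congr 1
    ring
  have hπn : Real.sqrt π ^ n = π ^ ((n:ℝ)/2) := by
    rw [Real.sqrt_eq_rpow, ← Real.rpow_natCast (π ^ ((1:ℝ)/2)) n, ← Real.rpow_mul pi_pos.le]
    congr 1
    ring
  have hbase : (π * ν / (1 - q)) ^ ((n:ℝ)/2) = π ^ ((n:ℝ)/2) * (c ^ ((n:ℝ)/2))⁻¹ := by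
    have hc1 : π * ν / (1 - q) = π / c := by
      rw [hc]
      field_simp
    rw [hc1, Real.div_rpow pi_pos.le hcpos.le, div_eq_mul_inv]
  have hcsplit : c ^ (-((n:ℝ)/2 + 1)) = (c ^ ((n:ℝ)/2))⁻¹ * c⁻¹ := by
    rw [show -((n:ℝ)/2 + 1) = -((n:ℝ)/2) + (-1) by ring, Real.rpow_add hcpos,
      Real.rpow_neg_one, Real.rpow_neg hcpos.le]
  have hcval : c⁻¹ = 2 * ((n:ℝ)/2 + p + 1) := by
    rw [hc, hp, inv_div, hν]
    field_simp
    ring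
  have hGa : (0:ℝ) < Gamma ((n:ℝ)/2 + 1) := Real.Gamma_pos_of_pos (by positivity)
  have hGb : (0:ℝ) < Gamma ((n:ℝ)/2 + p + 1) := Real.Gamma_pos_of_pos hG1pos
  have hcn : (0:ℝ) < c ^ ((n:ℝ)/2) := Real.rpow_pos_of_pos hcpos _
  have hZval : A.det * Jv = Z := by
    rw [hJv, hZdef]
    unfold qGaussZ
    rw [← hν, hrootS, hbase, hpq1, hπn, hcsplit, hcval, hG1,
      show Gamma (p + 1 + (n:ℝ)/2) = Gamma ((n:ℝ)/2 + p + 1) from by congr 1; ring]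
    field_simp
  have hZne : Z ≠ 0 := by
    rw [← hZval]
    apply mul_ne_zero hdAne
    rw [hJv]
    have hGc : (0:ℝ) < Gamma (p + 1) := Real.Gamma_pos_of_pos (by linarith [hppos])
    have hGd : (0:ℝ) < Gamma ((n:ℝ)/2 + 1 + (p + 1)) :=
      Real.Gamma_pos_of_pos (by linarith [hG1pos])
    have hπpos : (0:ℝ) < Real.sqrt π ^ n := pow_pos (Real.sqrt_pos.2 pi_pos) n
    have hcp : (0:ℝ) < c ^ (-((n:ℝ)/2 + 1)) := Real.rpow_pos_of_pos hcpos _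
    positivity
  rw [htrans, hcov, hint, hsum2, hAS]
  rw [show A.det * (S i j * Jv) = Z * S i j from by rw [← hZval]; ring]
  rw [one_div, inv_mul_cancel_left₀ hZne]
end

section
/- Discrete ent-max (core of the q-KL control theorem): let 0 ≤ q < 1, λ > 0, let r ∈ ℝ^n be a probability vector (r_i ≥ 0, Σ_i r_i = 1), and V ∈ ℝ^n. Suppose C ∈ ℝ is such that p*_i := r_i · exp_q(-(1/λ)V_i + C) satisfies Σ_i p*_i = 1. Then p* minimizes Σ_i V_i p_i + (λ/(2-q)) Σ_{i : r_i > 0} p_i log_q(p_i/r_i) over all probability vectors p with p_i = 0 whenever r_i = 0. -/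
open Finset

/-- The `q`-logarithm: `log_q(x) = (x^(1-q) - 1)/(1-q)` (for `x > 0`). -/
noncomputable def qlog (q x : ℝ) : ℝ := (x ^ (1 - q) - 1) / (1 - q)

/-- Young-type inequality. -/
lemma young_aux {s t b : ℝ} (hs : 0 < s) (ht : 0 ≤ t) (hb : 0 ≤ b) :
    (1 + s) * (t * b ^ s) ≤ t * t ^ s + s * (b * b ^ s) := by
  have h1s : (0:ℝ) < 1 + s := by linarith
  have hts : t * t ^ s = t ^ (1 + s) := by
    rw [Real.rpow_add' ht (by positivity), Real.rpow_one]
  have hbs : b * b ^ s = b ^ (1 + s) := by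
    rw [Real.rpow_add' hb (by positivity), Real.rpow_one]
  have key := Real.geom_mean_le_arith_mean2_weighted
    (w₁ := 1/(1+s)) (w₂ := s/(1+s)) (p₁ := t ^ (1+s)) (p₂ := b ^ (1+s))
    (by positivity) (by positivity) (by positivity) (by positivity)
    (by field_simp)
  have e1 : (t ^ (1+s)) ^ (1/(1+s)) = t := by
    rw [← Real.rpow_mul ht, one_div, mul_inv_cancel₀ h1s.ne', Real.rpow_one]
  have e2 : (b ^ (1+s)) ^ (s/(1+s)) = b ^ s := by
    rw [← Real.rpow_mul hb]
    congr 1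
    field_simp
  rw [e1, e2] at key
  have hmul := mul_le_mul_of_nonneg_left key h1s.le
  have e3 : (1+s) * (1/(1+s) * t ^ (1+s) + s/(1+s) * b ^ (1+s))
      = t ^ (1+s) + s * b ^ (1+s) := by field_simp
  rw [e3] at hmul
  rw [hts, hbs]
  linarith

/-- Pointwise convexity inequality. -/
lemma pointwise_aux (q lam rr pp V C : ℝ) (hq0 : 0 ≤ q) (hq1 : q < 1)
    (hlam : 0 < lam) (hr : 0 < rr) (hp : 0 ≤ pp) :
    V * (rr * qexp q (-(1 / lam) * V + C)) +
      (lam / (2 - q)) * ((rr * qexp q (-(1 / lam) * V + C)) *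
        qlog q ((rr * qexp q (-(1 / lam) * V + C)) / rr)) -
      (lam * C + lam / (2 - q)) * (rr * qexp q (-(1 / lam) * V + C)) ≤
    V * pp + (lam / (2 - q)) * (pp * qlog q (pp / rr)) -
      (lam * C + lam / (2 - q)) * pp := by
  set s : ℝ := 1 - q with hs_def
  have hs : 0 < s := by rw [hs_def]; linarith
  have h2qs : 2 - q = 1 + s := by rw [hs_def]; ring
  have h1s : (0:ℝ) < 1 + s := by linarith
  rw [h2qs]
  set u : ℝ := -(1 / lam) * V + C with hu_def
  have hVu : V = lam * C - lam * u := by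
    rw [hu_def]; field_simp; ring
  set a : ℝ := max (1 + s * u) 0 with ha_def
  have ha : 0 ≤ a := le_max_right _ _
  set b : ℝ := a ^ (1 / s) with hb_def
  have hb : 0 ≤ b := Real.rpow_nonneg ha _
  have hqe : qexp q u = b := by rw [qexp, hb_def, ha_def, hs_def]
  have hbs : b ^ s = a := by
    rw [hb_def, ← Real.rpow_mul ha, one_div, inv_mul_cancel₀ hs.ne', Real.rpow_one]
  rw [hqe]
  have hdivr : rr * b / rr = b := by field_simp
  have hqlb : qlog q (rr * b / rr) = (a - 1) / s := by
    rw [hdivr, qlog, ← hs_def, hbs]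
  set t : ℝ := pp / rr with ht_def
  have ht : 0 ≤ t := div_nonneg hp hr.le
  have hpt : pp = rr * t := by rw [ht_def]; field_simp
  have hqlp : qlog q (pp / rr) = (t ^ s - 1) / s := by
    rw [qlog, ← hs_def, ← ht_def]
  have hLHS : V * (rr * b) + lam / (1 + s) * (rr * b * qlog q (rr * b / rr)) -
      (lam * C + lam / (1 + s)) * (rr * b) = -(lam * rr * (a * b)) / (1 + s) := by
    rw [hqlb, hVu]
    rcases le_or_gt 0 (1 + s * u) with h | h
    · have haeq : a = 1 + s * u := max_eq_left h
      rw [haeq]; field_simp; ring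
    · have haeq : a = 0 := max_eq_right h.le
      have hbeq : b = 0 := by
        rw [hb_def, haeq, Real.zero_rpow (by positivity)]
      rw [haeq, hbeq]; ring
  have hRHS : V * pp + lam / (1 + s) * (pp * qlog q (pp / rr)) -
      (lam * C + lam / (1 + s)) * pp
      = lam * rr * ((t * t ^ s) / (s * (1 + s)) - t * (1 + s * u) / s) := by
    rw [hqlp, hVu, hpt]
    field_simp
    ring
  rw [hLHS, hRHS]
  have h1 : t * (1 + s * u) ≤ t * a :=
    mul_le_mul_of_nonneg_left (le_max_left _ _) ht
  have h2 : (1 + s) * (t * a) ≤ t * t ^ s + s * (b * a) := by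
    have := young_aux hs ht hb
    rwa [hbs] at this
  have key0 : -((a * b) * s) ≤ t * t ^ s - t * (1 + s * u) * (1 + s) := by
    nlinarith [mul_le_mul_of_nonneg_left h1 h1s.le]
  have expand : lam * rr * ((t * t ^ s) / (s * (1 + s)) - t * (1 + s * u) / s)
      - (-(lam * rr * (a * b)) / (1 + s))
      = lam * rr / (s * (1 + s)) * ((t * t ^ s - t * (1 + s * u) * (1 + s)) + (a * b) * s) := by
    field_simp
    ring
  have pos : 0 ≤ lam * rr / (s * (1 + s)) * ((t * t ^ s - t * (1 + s * u) * (1 + s)) + (a * b) * s) := by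
    apply mul_nonneg (by positivity)
    linarith
  linarith

/-- Discrete ent-max: `p*_i = r_i exp_q(-(1/λ)V_i + C)` minimizes
`Σ_i V_i p_i + (λ/(2-q)) Σ_{i : r_i > 0} p_i log_q(p_i / r_i)` over probability
vectors `p` that vanish wherever `r` does. -/
theorem discrete_entmax (n : ℕ) (q lam : ℝ) (hq0 : 0 ≤ q) (hq1 : q < 1)
    (hlam : 0 < lam) (r : Fin n → ℝ) (hr : ∀ i, 0 ≤ r i) (hrsum : ∑ i, r i = 1)
    (V : Fin n → ℝ) (C : ℝ)
    (hnorm : ∑ i, r i * qexp q (-(1 / lam) * V i + C) = 1) :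
    ∀ p : Fin n → ℝ, (∀ i, 0 ≤ p i) → (∑ i, p i = 1) →
      (∀ i, r i = 0 → p i = 0) →
      (∑ i, V i * (r i * qexp q (-(1 / lam) * V i + C))) +
          (lam / (2 - q)) *
            ∑ i ∈ Finset.univ.filter fun i => 0 < r i,
              (r i * qexp q (-(1 / lam) * V i + C)) *
                qlog q ((r i * qexp q (-(1 / lam) * V i + C)) / r i) ≤
        (∑ i, V i * p i) +
          (lam / (2 - q)) *
            ∑ i ∈ Finset.univ.filter fun i => 0 < r i,
              p i * qlog q (p i / r i) := by
  intro p hp hpsum hpz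
  set P : Fin n → ℝ := fun i => r i * qexp q (-(1 / lam) * V i + C) with hP_def
  set S : Finset (Fin n) := Finset.univ.filter fun i => 0 < r i with hS_def
  have hrS : ∀ i ∉ S, r i = 0 := by
    intro i hi
    rcases (hr i).lt_or_eq with h | h
    · exact absurd (by simp [hS_def, h]) hi
    · exact h.symm
  have hPz : ∀ i ∉ S, P i = 0 := by
    intro i hi; simp [hP_def, hrS i hi]
  have hpzS : ∀ i ∉ S, p i = 0 := fun i hi => hpz i (hrS i hi)
  have hPsumS : ∑ i ∈ S, P i = 1 := by
    rw [Finset.sum_subset (hS_def ▸ Finset.filter_subset _ _)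
      (fun i _ hi => hPz i hi)]
    exact hnorm
  have hpsumS : ∑ i ∈ S, p i = 1 := by
    rw [Finset.sum_subset (hS_def ▸ Finset.filter_subset _ _)
      (fun i _ hi => hpzS i hi)]
    exact hpsum
  have hVP : ∑ i, V i * P i = ∑ i ∈ S, V i * P i :=
    (Finset.sum_subset (hS_def ▸ Finset.filter_subset _ _)
      (fun i _ hi => by rw [hPz i hi, mul_zero])).symm
  have hVp : ∑ i, V i * p i = ∑ i ∈ S, V i * p i :=
    (Finset.sum_subset (hS_def ▸ Finset.filter_subset _ _)
      (fun i _ hi => by rw [hpzS i hi, mul_zero])).symm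
  have key : ∑ i ∈ S, (V i * P i + (lam / (2 - q)) * (P i * qlog q (P i / r i))
        - (lam * C + lam / (2 - q)) * P i)
      ≤ ∑ i ∈ S, (V i * p i + (lam / (2 - q)) * (p i * qlog q (p i / r i))
        - (lam * C + lam / (2 - q)) * p i) := by
    apply Finset.sum_le_sum
    intro i hi
    have hri : 0 < r i := by
      rcases (hr i).lt_or_eq with h | h
      · exact h
      · exact absurd hi (by simp [hS_def, ← h])
    exact pointwise_aux q lam (r i) (p i) (V i) C hq0 hq1 hlam hri (hp i)
  have expand1 : ∑ i ∈ S, (V i * P i + (lam / (2 - q)) * (P i * qlog q (P i / r i))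
        - (lam * C + lam / (2 - q)) * P i)
      = (∑ i ∈ S, V i * P i) + (lam / (2 - q)) * (∑ i ∈ S, P i * qlog q (P i / r i))
        - (lam * C + lam / (2 - q)) * (∑ i ∈ S, P i) := by
    rw [Finset.mul_sum, Finset.mul_sum, ← Finset.sum_add_distrib, ← Finset.sum_sub_distrib]
  have expand2 : ∑ i ∈ S, (V i * p i + (lam / (2 - q)) * (p i * qlog q (p i / r i))
        - (lam * C + lam / (2 - q)) * p i)
      = (∑ i ∈ S, V i * p i) + (lam / (2 - q)) * (∑ i ∈ S, p i * qlog q (p i / r i))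
        - (lam * C + lam / (2 - q)) * (∑ i ∈ S, p i) := by
    rw [Finset.mul_sum, Finset.mul_sum, ← Finset.sum_add_distrib, ← Finset.sum_sub_distrib]
  rw [expand1, expand2, hPsumS, hpsumS] at key
  rw [hVP, hVp]
  show (∑ i ∈ S, V i * P i) + (lam / (2-q)) * ∑ i ∈ S, P i * qlog q (P i / r i)
      ≤ (∑ i ∈ S, V i * p i) + (lam / (2-q)) * ∑ i ∈ S, p i * qlog q (p i / r i)
  linarith
end

section
/- Nonnegativity of the q-Kullback–Leibler divergence (finite case): let 0 ≤ q < 1 and let p, r ∈ ℝ^n be probability vectors with p_i = 0 whenever r_i = 0. Then Σ_{i : p_i > 0} p_i log_q(p_i/r_i) ≥ 0, with equality if and only if p = r. -/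
open Finset

/-
For `q < 1` and `x > 0` one has `log_q x ≥ 1 - 1/x`, strictly unless `x = 1`
(Bernoulli's inequality for the exponent `2 - q > 1`). With `x = p_i/r_i` this gives
`p_i log_q(p_i/r_i) ≥ p_i - r_i`, and summing over the support of `p` bounds the divergence
below by `1 - Σ_{p_i > 0} r_i ≥ 0`. Equality forces `p_i = r_i` on the support of `p`, hence
`p ≤ r` everywhere, and two probability vectors with `p ≤ r` coincide.
-/

theorem qlog_one (q : ℝ) : qlog q 1 = 0 := by
  simp [qlog]

theorem one_sub_inv_lt_qlog {q x : ℝ} (hq : q < 1) (hx : 0 < x) (hx1 : x ≠ 1) :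
    1 - x⁻¹ < qlog q x := by
  have hc : 0 < 1 - q := by linarith
  have bernoulli : 1 + (1 + (1 - q)) * (x - 1) < x * x ^ (1 - q) := by
    have h := one_add_mul_self_lt_rpow_one_add (by linarith : -1 ≤ x - 1)
      (sub_ne_zero.mpr hx1) (by linarith : 1 < 1 + (1 - q))
    rwa [add_sub_cancel, Real.rpow_one_add' hx.le (by linarith)] at h
  rw [qlog, lt_div_iff₀ hc]
  have hscale : (1 - x⁻¹) * (1 - q) * x = (1 - q) * (x - 1) := by field_simp
  nlinarith

theorem one_sub_inv_le_qlog {q x : ℝ} (hq : q < 1) (hx : 0 < x) : 1 - x⁻¹ ≤ qlog q x := by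
  rcases eq_or_ne x 1 with rfl | hx1
  · simp [qlog_one]
  · exact (one_sub_inv_lt_qlog hq hx hx1).le

theorem mul_qlog_div_eq {q a b : ℝ} (ha : a ≠ 0) :
    a * qlog q (a / b) = a - b + a * (qlog q (a / b) - (1 - (a / b)⁻¹)) := by
  field_simp
  ring

theorem sub_le_mul_qlog_div {q a b : ℝ} (hq : q < 1) (ha : 0 < a) (hb : 0 < b) :
    a - b ≤ a * qlog q (a / b) := by
  rw [mul_qlog_div_eq ha.ne']
  have := one_sub_inv_le_qlog hq (div_pos ha hb)
  nlinarith

theorem mul_qlog_div_eq_sub_iff {q a b : ℝ} (hq : q < 1) (ha : 0 < a) (hb : 0 < b) :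
    a * qlog q (a / b) = a - b ↔ a = b := by
  refine ⟨fun h => ?_, fun h => by simp [h, div_self hb.ne', qlog_one]⟩
  by_contra hab
  have hx1 : a / b ≠ 1 := fun h' => hab ((div_eq_one_iff_eq hb.ne').mp h')
  have := one_sub_inv_lt_qlog hq (div_pos ha hb) hx1
  rw [mul_qlog_div_eq ha.ne'] at h
  nlinarith

theorem qKL_nonneg_general (n : ℕ) (q : ℝ) (hq1 : q < 1)
    (p r : Fin n → ℝ) (hp : ∀ i, 0 ≤ p i) (hpsum : ∑ i, p i = 1)
    (hr : ∀ i, 0 ≤ r i) (hrsum : ∑ i, r i = 1)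
    (habs : ∀ i, r i = 0 → p i = 0) :
    0 ≤ ∑ i ∈ Finset.univ.filter fun i => 0 < p i, p i * qlog q (p i / r i) ∧
      ((∑ i ∈ Finset.univ.filter fun i => 0 < p i, p i * qlog q (p i / r i)) = 0 ↔
        p = r) := by
  set s := Finset.univ.filter fun i => 0 < p i
  have hps : ∀ i ∈ s, 0 < p i := fun i hi => (mem_filter.mp hi).2
  have hrs : ∀ i ∈ s, 0 < r i := fun i hi =>
    (hr i).lt_of_ne fun h => (hps i hi).ne' (habs i h.symm)
  have hpsum_s : ∑ i ∈ s, p i = 1 :=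
    hpsum ▸ sum_filter_of_ne fun i _ h => (hp i).lt_of_ne' h
  have hrsum_s : ∑ i ∈ s, r i ≤ 1 :=
    hrsum ▸ sum_le_sum_of_subset_of_nonneg (subset_univ s) fun i _ _ => hr i
  have hterm : ∀ i ∈ s, p i - r i ≤ p i * qlog q (p i / r i) := fun i hi =>
    sub_le_mul_qlog_div hq1 (hps i hi) (hrs i hi)
  have hlower : ∑ i ∈ s, (p i - r i) ≤ ∑ i ∈ s, p i * qlog q (p i / r i) := sum_le_sum hterm
  have hmass : ∑ i ∈ s, (p i - r i) = 1 - ∑ i ∈ s, r i := by rw [sum_sub_distrib, hpsum_s]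
  refine ⟨by linarith, fun hzero => ?_, ?_⟩
  · have heq_s : ∀ i ∈ s, p i = r i := fun i hi =>
      (mul_qlog_div_eq_sub_iff hq1 (hps i hi) (hrs i hi)).mp <| Eq.symm <|
        (sum_eq_sum_iff_of_le hterm).mp (by linarith) i hi
    have hle : ∀ i ∈ univ, p i ≤ r i := fun i _ => by
      by_cases hi : i ∈ s
      · exact (heq_s i hi).le
      · have hp0 : p i = 0 := (hp i).antisymm' (not_lt.mp (by simpa [s] using hi))
        exact hp0 ▸ hr i
    exact funext fun i => (sum_eq_sum_iff_of_le hle).mp (hpsum.trans hrsum.symm) i (mem_univ i)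
  · rintro rfl
    exact sum_eq_zero fun i hi => by simp [div_self (hps i hi).ne', qlog_one]

/-- Nonnegativity of the `q`-KL divergence (finite case):
`Σ_{i : p_i > 0} p_i log_q(p_i / r_i) ≥ 0`, with equality iff `p = r`. -/
theorem qKL_nonneg (n : ℕ) (q : ℝ) (hq0 : 0 ≤ q) (hq1 : q < 1)
    (p r : Fin n → ℝ) (hp : ∀ i, 0 ≤ p i) (hpsum : ∑ i, p i = 1)
    (hr : ∀ i, 0 ≤ r i) (hrsum : ∑ i, r i = 1)
    (habs : ∀ i, r i = 0 → p i = 0) :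
    0 ≤ ∑ i ∈ Finset.univ.filter fun i => 0 < p i, p i * qlog q (p i / r i) ∧
      ((∑ i ∈ Finset.univ.filter fun i => 0 < p i, p i * qlog q (p i / r i)) = 0 ↔
        p = r) :=
  qKL_nonneg_general n q hq1 p r hp hpsum hr hrsum habs
end
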